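/- arXiv:2603.17509 — 3 statements merged into one kernel-verified Lean document; each statement's English description precedes it below -/
import Mathlib

section
/- If sequences A and a satisfy A(1)=A(2)=1, A(n)=A(A(n-1))+A(n-A(n-1)) for n≥3, and a(n)=2A(n)-n, then for all n≥3, a(n) = a(n₁) + a(n₂) where n₁ = (n-1+a(n-1))/2 and n₂ = (n+1-a(n-1))/2, provided these are valid indices (i.e., n-1+a(n-1) is even). -/
theorem conway_detrended_recurrence
    (A : ℕ → ℕ) (a : ℕ → ℤ)
    (hA1 : A 1 = 1) (hA2 : A 2 = 1)
    (hArec : ∀ n : ℕ, 3 ≤ n → A n = A (A (n - 1)) + A (n - A (n - 1)))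
    (ha : ∀ n : ℕ, a n = 2 * (A n : ℤ) - n) :
    ∀ n : ℕ, 3 ≤ n → ∀ n₁ n₂ : ℕ,
      (2 * n₁ : ℤ) = (n : ℤ) - 1 + a (n - 1) →
      (2 * n₂ : ℤ) = (n : ℤ) + 1 - a (n - 1) →
      a n = a n₁ + a n₂ := by
  intro n hn n₁ n₂ h1 h2
  have h3 := ha (n - 1)
  have hn1 : n₁ = A (n - 1) := by omega
  have hn2 : n₂ = n - A (n - 1) := by omega
  subst hn1 hn2
  rw [ha n, ha (A (n - 1)), ha (n - A (n - 1)), hArec n hn]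
  push_cast
  omega
end

section
/- Let two pairs (E₁,F₁) and (E₂,F₂) each satisfy the CME with E's on [0,r] and F's on [0,2r], and suppose E₁(r)=E₂(0) and F₁(2r)=F₂(0) so that the composites are well-defined. Define E on [0,2r] by E(x)=E₁(x) for 0 ≤ x ≤ r and E(x)=E₂(x-r) for r < x ≤ 2r, and F on [0,4r] by F(x)=F₁(x) for 0 ≤ x ≤ 2r and F(x)=F₂(x-2r) for 2r < x ≤ 4r. If for each x in [0,2r] the arguments (x±F₁(x))/2 lie in [0,r], then the pair (E,F) satisfies the CME with E on [0,2r] and F on [0,4r]. -/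
/-!
On `[0, 2r]` the composite pair is `(E₁, F₁)` itself. On `[2r, 4r]` it is `(E₂, F₂)` translated:
moving `x` by `2r` moves both arguments `(x ± F x) / 2` by `r`, so they land in `[r, 2r]`, where `E`
is the translate of `E₂` (at the junction `r` by `E₁ r = E₂ 0`).
-/

open Set

def SolvesCMEAt (E F : ℝ → ℝ) (S : Set ℝ) (x : ℝ) : Prop :=
  (x + F x) / 2 ∈ S ∧ (x - F x) / 2 ∈ S ∧ F x = E ((x + F x) / 2) + E ((x - F x) / 2)

namespace SolvesCMEAt

variable {E E' F F' : ℝ → ℝ} {S T : Set ℝ} {x : ℝ}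

theorem mono (h : SolvesCMEAt E F S x) (hST : S ⊆ T) : SolvesCMEAt E F T x :=
  ⟨hST h.1, hST h.2.1, h.2.2⟩

theorem congr (h : SolvesCMEAt E F S x) (hE : EqOn E E' S) (hF : F x = F' x) :
    SolvesCMEAt E' F' S x := by
  obtain ⟨hplus, hminus, hcme⟩ := h
  rw [hF] at hplus hminus hcme
  exact ⟨hplus, hminus, by rw [← hE hplus, ← hE hminus]; exact hcme⟩

theorem shift (a : ℝ) (h : SolvesCMEAt E F S (x - 2 * a)) :
    SolvesCMEAt (fun t ↦ E (t - a)) (fun t ↦ F (t - 2 * a)) ((· + a) '' S) x := by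
  obtain ⟨hplus, hminus, hcme⟩ := h
  have hplus_eq : (x + F (x - 2 * a)) / 2 = (x - 2 * a + F (x - 2 * a)) / 2 + a := by ring
  have hminus_eq : (x - F (x - 2 * a)) / 2 = (x - 2 * a - F (x - 2 * a)) / 2 + a := by ring
  simp only [SolvesCMEAt, hplus_eq, hminus_eq, add_sub_cancel_right]
  exact ⟨mem_image_of_mem _ hplus, mem_image_of_mem _ hminus, hcme⟩

end SolvesCMEAt

theorem cme_composition_lemma_general
    (r : ℝ) (E₁ F₁ E₂ F₂ E F : ℝ → ℝ)
    (harg₁ : ∀ x ∈ Set.Icc (0:ℝ) (2*r),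
      (x + F₁ x) / 2 ∈ Set.Icc (0:ℝ) r ∧ (x - F₁ x) / 2 ∈ Set.Icc (0:ℝ) r)
    (harg₂ : ∀ x ∈ Set.Icc (0:ℝ) (2*r),
      (x + F₂ x) / 2 ∈ Set.Icc (0:ℝ) r ∧ (x - F₂ x) / 2 ∈ Set.Icc (0:ℝ) r)
    (hCME₁ : ∀ x ∈ Set.Icc (0:ℝ) (2*r),
      F₁ x = E₁ ((x + F₁ x) / 2) + E₁ ((x - F₁ x) / 2))
    (hCME₂ : ∀ x ∈ Set.Icc (0:ℝ) (2*r),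
      F₂ x = E₂ ((x + F₂ x) / 2) + E₂ ((x - F₂ x) / 2))
    (hmatchE : E₁ r = E₂ 0)
    (hE : ∀ x : ℝ, (0 ≤ x → x ≤ r → E x = E₁ x) ∧ (r < x → x ≤ 2*r → E x = E₂ (x - r)))
    (hF : ∀ x : ℝ, (0 ≤ x → x ≤ 2*r → F x = F₁ x) ∧ (2*r < x → x ≤ 4*r → F x = F₂ (x - 2*r))) :
    ∀ x ∈ Set.Icc (0:ℝ) (4*r),
      (x + F x) / 2 ∈ Set.Icc (0:ℝ) (2*r) ∧ (x - F x) / 2 ∈ Set.Icc (0:ℝ) (2*r) ∧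
      F x = E ((x + F x) / 2) + E ((x - F x) / 2) := by
  have hE₁ : EqOn E₁ E (Icc 0 r) := fun t ht ↦ ((hE t).1 ht.1 ht.2).symm
  have hE₂ : EqOn (fun t ↦ E₂ (t - r)) E (Icc r (2 * r)) := by
    intro t ⟨hrt, ht2r⟩
    rcases hrt.eq_or_lt with rfl | hrt
    · show E₂ (r - r) = E r
      rw [sub_self, ← hmatchE, hE₁ ⟨by linarith, le_rfl⟩]
    · exact ((hE t).2 hrt ht2r).symm
  intro x ⟨hx0, hx4r⟩
  rcases le_or_gt x (2 * r) with hx2r | hx2r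
  · have h₁ : SolvesCMEAt E₁ F₁ (Icc 0 r) x :=
      ⟨(harg₁ x ⟨hx0, hx2r⟩).1, (harg₁ x ⟨hx0, hx2r⟩).2, hCME₁ x ⟨hx0, hx2r⟩⟩
    exact (h₁.congr hE₁ ((hF x).1 hx0 hx2r).symm).mono (Icc_subset_Icc le_rfl (by linarith))
  · have hy : x - 2 * r ∈ Icc 0 (2 * r) := ⟨by linarith, by linarith⟩
    have h₂ : SolvesCMEAt E₂ F₂ (Icc 0 r) (x - 2 * r) :=
      ⟨(harg₂ _ hy).1, (harg₂ _ hy).2, hCME₂ _ hy⟩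
    have h₂' := h₂.shift r
    rw [image_add_const_Icc, zero_add, ← two_mul] at h₂'
    exact (h₂'.congr hE₂ ((hF x).2 hx2r hx4r).symm).mono (Icc_subset_Icc (by linarith) le_rfl)

/-- Composition Lemma for the Conway Model Equation. -/
theorem cme_composition_lemma
    (r : ℝ) (hr : 0 < r) (E₁ F₁ E₂ F₂ E F : ℝ → ℝ)
    (harg₁ : ∀ x ∈ Set.Icc (0:ℝ) (2*r),
      (x + F₁ x) / 2 ∈ Set.Icc (0:ℝ) r ∧ (x - F₁ x) / 2 ∈ Set.Icc (0:ℝ) r)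
    (harg₂ : ∀ x ∈ Set.Icc (0:ℝ) (2*r),
      (x + F₂ x) / 2 ∈ Set.Icc (0:ℝ) r ∧ (x - F₂ x) / 2 ∈ Set.Icc (0:ℝ) r)
    (hCME₁ : ∀ x ∈ Set.Icc (0:ℝ) (2*r),
      F₁ x = E₁ ((x + F₁ x) / 2) + E₁ ((x - F₁ x) / 2))
    (hCME₂ : ∀ x ∈ Set.Icc (0:ℝ) (2*r),
      F₂ x = E₂ ((x + F₂ x) / 2) + E₂ ((x - F₂ x) / 2))
    (hmatchE : E₁ r = E₂ 0) (hmatchF : F₁ (2*r) = F₂ 0)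
    (hE : ∀ x : ℝ, (0 ≤ x → x ≤ r → E x = E₁ x) ∧ (r < x → x ≤ 2*r → E x = E₂ (x - r)))
    (hF : ∀ x : ℝ, (0 ≤ x → x ≤ 2*r → F x = F₁ x) ∧ (2*r < x → x ≤ 4*r → F x = F₂ (x - 2*r))) :
    ∀ x ∈ Set.Icc (0:ℝ) (4*r),
      (x + F x) / 2 ∈ Set.Icc (0:ℝ) (2*r) ∧ (x - F x) / 2 ∈ Set.Icc (0:ℝ) (2*r) ∧
      F x = E ((x + F x) / 2) + E ((x - F x) / 2) :=
  cme_composition_lemma_general r E₁ F₁ E₂ F₂ E F harg₁ harg₂ hCME₁ hCME₂ hmatchE hE hF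
end

section
/- Define the discrete functions F_K on nodes X(K,n) = Σ_{m=0}^{n-1} C(K+1,m) by F_K(X(K,n)) = C(K,n-1) for n = 0,...,K+2. Then for all K ≥ 1 and all 1 ≤ n ≤ K+1: F_K(X(K,n)) = F_{K-1}((X(K,n)+F_K(X(K,n)))/2) + F_{K-1}((X(K,n)-F_K(X(K,n)))/2). That is, (X(K,n)±F(K,n))/2 are themselves nodes of level K-1 (equal to X(K-1,n) and X(K-1,n-1) respectively), and C(K,n-1) = C(K-1,n-1) + C(K-1,n-2). -/
/-- Extended binomial coefficient: `C(N,k) = 0` for `k < 0` or `k > N`. -/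
def extChoose (N : ℕ) (k : ℤ) : ℕ :=
  if 0 ≤ k then N.choose k.toNat else 0

/-- `F(K,n) = C(K, n-1)`. -/
def Fnode (K : ℕ) (n : ℤ) : ℕ := extChoose K (n - 1)

/-- `X(K,n) = Σ_{m=0}^{n-1} C(K+1,m)`. -/
def Xnode (K : ℕ) (n : ℤ) : ℕ :=
  ∑ m ∈ Finset.range n.toNat, (K + 1).choose m

/-!
Both identities come from Pascal's rule `C(K+1,m) = C(K,m) + C(K,m-1)`. Applied termwise to the
partial row sums it gives `X(K+1,n) = X(K,n) + X(K,n-1)`, while `X(K,n) - X(K,n-1) = C(K+1,n-1)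
= F(K+1,n)`. Hence `X(K+1,n) ± F(K+1,n)` is twice the level-`K` node `X(K,n)`, resp. `X(K,n-1)`,
and the value `F(K+1,n)` there splits by Pascal's rule once more into the values of `F(K,·)` at
those two nodes.
-/

open Finset

theorem sum_range_succ_choose_succ (N t : ℕ) :
    ∑ m ∈ range (t + 1), (N + 1).choose m =
      ∑ m ∈ range (t + 1), N.choose m + ∑ m ∈ range t, N.choose m := by
  rw [sum_range_succ', sum_range_succ' (fun m => N.choose m)]
  simp only [Nat.choose_succ_succ', sum_add_distrib, Nat.choose_zero_right]
  ring

theorem extChoose_succ (N : ℕ) (k : ℤ) :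
    extChoose (N + 1) k = extChoose N k + extChoose N (k - 1) := by
  rcases lt_trichotomy k 0 with hk | rfl | hk
  · simp only [extChoose, if_neg hk.not_ge, if_neg (show ¬(0 ≤ k - 1) by omega)]
  · simp [extChoose]
  · obtain ⟨j, rfl⟩ : ∃ j : ℕ, k = j + 1 := ⟨k.toNat - 1, by omega⟩
    simp only [extChoose, add_sub_cancel_right, if_pos (by positivity : (0 : ℤ) ≤ j + 1),
      if_pos (Int.natCast_nonneg j), Int.toNat_natCast]
    rw [show ((j : ℤ) + 1).toNat = j + 1 by omega, Nat.choose_succ_succ', add_comm]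

theorem Fnode_succ (K : ℕ) (n : ℤ) : Fnode (K + 1) n = Fnode K n + Fnode K (n - 1) :=
  extChoose_succ K (n - 1)

theorem Xnode_succ (K : ℕ) (n : ℤ) : Xnode (K + 1) n = Xnode K n + Xnode K (n - 1) := by
  rcases le_or_gt n 0 with hn | hn
  · simp [Xnode, Int.toNat_eq_zero.mpr hn, Int.toNat_eq_zero.mpr (by omega : n - 1 ≤ 0)]
  · obtain ⟨t, rfl⟩ : ∃ t : ℕ, n = t + 1 := ⟨n.toNat - 1, by omega⟩
    simp only [Xnode, add_sub_cancel_right, Int.toNat_natCast]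
    rw [show ((t : ℤ) + 1).toNat = t + 1 by omega]
    exact sum_range_succ_choose_succ (K + 1) t

theorem Xnode_eq_Xnode_sub_one_add_Fnode_succ (K : ℕ) {n : ℤ} (hn : 1 ≤ n) :
    Xnode K n = Xnode K (n - 1) + Fnode (K + 1) n := by
  obtain ⟨t, rfl⟩ : ∃ t : ℕ, n = t + 1 := ⟨n.toNat - 1, by omega⟩
  simp only [Xnode, Fnode, extChoose, add_sub_cancel_right, Int.toNat_natCast,
    if_pos (Int.natCast_nonneg t)]
  rw [show ((t : ℤ) + 1).toNat = t + 1 by omega, sum_range_succ]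

theorem Xnode_succ_add_Fnode_succ (K : ℕ) {n : ℤ} (hn : 1 ≤ n) :
    Xnode (K + 1) n + Fnode (K + 1) n = 2 * Xnode K n := by
  have := Xnode_eq_Xnode_sub_one_add_Fnode_succ K hn
  rw [Xnode_succ]
  omega

theorem Xnode_succ_eq_Fnode_succ_add (K : ℕ) {n : ℤ} (hn : 1 ≤ n) :
    Xnode (K + 1) n = Fnode (K + 1) n + 2 * Xnode K (n - 1) := by
  have := Xnode_eq_Xnode_sub_one_add_Fnode_succ K hn
  rw [Xnode_succ]
  omega

/-- Discrete part of the Triangle Theorem: if `g` takes the values `F(K,·)` on the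
level-`K` nodes and `g'` the values `F(K-1,·)` on the level-`(K-1)` nodes, then `g`
satisfies the Conway Model Equation through `g'` at every inner node. -/
theorem triangle_theorem_discrete
    (K : ℕ) (hK : 1 ≤ K) (g g' : ℤ → ℤ)
    (hg : ∀ n : ℤ, 0 ≤ n → n ≤ K + 2 → g (Xnode K n) = Fnode K n)
    (hg' : ∀ n : ℤ, 0 ≤ n → n ≤ K + 1 → g' (Xnode (K - 1) n) = Fnode (K - 1) n) :
    ∀ n : ℤ, 1 ≤ n → n ≤ K + 1 →
      ((Xnode K n : ℤ) + Fnode K n) / 2 = Xnode (K - 1) n ∧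
      ((Xnode K n : ℤ) - Fnode K n) / 2 = Xnode (K - 1) (n - 1) ∧
      (Fnode K n : ℤ) = Fnode (K - 1) n + Fnode (K - 1) (n - 1) ∧
      g (Xnode K n) =
        g' (((Xnode K n : ℤ) + g (Xnode K n)) / 2) +
        g' (((Xnode K n : ℤ) - g (Xnode K n)) / 2) := by
  intro n hn1 hnK
  obtain ⟨L, rfl⟩ : ∃ L : ℕ, K = L + 1 := ⟨K - 1, by omega⟩
  simp only [Nat.add_sub_cancel] at hg' ⊢
  have hplus : ((Xnode (L + 1) n : ℤ) + Fnode (L + 1) n) / 2 = Xnode L n := by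
    have := Xnode_succ_add_Fnode_succ L hn1
    omega
  have hminus : ((Xnode (L + 1) n : ℤ) - Fnode (L + 1) n) / 2 = Xnode L (n - 1) := by
    have := Xnode_succ_eq_Fnode_succ_add L hn1
    omega
  have hpascal : (Fnode (L + 1) n : ℤ) = Fnode L n + Fnode L (n - 1) := by
    exact_mod_cast Fnode_succ L n
  refine ⟨hplus, hminus, hpascal, ?_⟩
  push_cast at hg hg' hnK
  rw [hg n (by omega) (by omega), hplus, hminus, hg' n (by omega) (by omega),
    hg' (n - 1) (by omega) (by omega), hpascal]
end
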